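/- If (L, η) is a lasso on Grph such that for every graph G the vertex map of η_G is a bijection, then every component η_G : G ⟶ L(G) is an isomorphism; that is, up to isomorphism the trivial lasso (identity functor with identity natural transformation) is the unique vertex-trivial lasso on Grph. -/

import Mathlib

open CategoryTheory CategoryTheory.Limits

/-- The category of directed multigraphs, realized as the functor category from the
walking parallel pair (objects `zero` = edges, `one` = vertices; morphisms
`left` = source, `right` = target) to `Type`. -/
abbrev Grph : Type 1 := WalkingParallelPair ⥤ Type

namespace Grph

/-- The source map of a graph. -/
def src (G : Grph) : G.obj .zero → G.obj .one := G.map .left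

/-- The target map of a graph. -/
def tgt (G : Grph) : G.obj .zero → G.obj .one := G.map .right

/-- The connectivity relation on the vertices of a graph: the equivalence relation
generated by relating `u` and `v` whenever some edge has source `u` and target `v`. -/
def connRel (G : Grph) : G.obj .one → G.obj .one → Prop :=
  Relation.EqvGen fun u v => ∃ e, G.src e = u ∧ G.tgt e = v

lemma connRel_map {G H : Grph} (φ : G ⟶ H) {u v : G.obj .one} (h : G.connRel u v) :
    H.connRel (φ.app .one u) (φ.app .one v) := by
  induction h with
  | rel u v h =>
      obtain ⟨e, he, he'⟩ := h
      refine Relation.EqvGen.rel _ _ ⟨φ.app .zero e, ?_, ?_⟩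
      · rw [← he]; exact (ConcreteCategory.congr_hom (φ.naturality WalkingParallelPairHom.left) e).symm
      · rw [← he']; exact (ConcreteCategory.congr_hom (φ.naturality WalkingParallelPairHom.right) e).symm
  | refl u => exact Relation.EqvGen.refl _
  | symm u v _ ih => exact Relation.EqvGen.symm _ _ ih
  | trans u v w _ _ ih₁ ih₂ => exact Relation.EqvGen.trans _ _ _ ih₁ ih₂

/-- The graph obtained from `G` by quotienting its vertex set by the connectivity
relation; its edge set is that of `G`. -/
def ccObj (G : Grph) : Grph :=
  parallelPair (TypeCat.ofHom fun e => Quot.mk G.connRel (G.src e))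
    (TypeCat.ofHom fun e => Quot.mk G.connRel (G.tgt e))

/-- The action of the connected components construction on graph homomorphisms. -/
def ccMap {G H : Grph} (φ : G ⟶ H) : ccObj G ⟶ ccObj H :=
  parallelPairHom _ _ _ _ (φ.app .zero)
    (TypeCat.ofHom (Quot.map (φ.app .one) (fun _ _ h => connRel_map φ h)))
    (by
      ext e
      exact congrArg (Quot.mk H.connRel)
        (ConcreteCategory.congr_hom (φ.naturality WalkingParallelPairHom.left) e))
    (by
      ext e
      exact congrArg (Quot.mk H.connRel)
        (ConcreteCategory.congr_hom (φ.naturality WalkingParallelPairHom.right) e))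

/-- The connected components functor `cc : Grph ⥤ Grph`. -/
def cc : Grph ⥤ Grph where
  obj := ccObj
  map := ccMap
  map_id G := by
    apply NatTrans.ext
    funext x
    cases x
    · rfl
    · ext q
      induction q using Quot.ind
      rfl
  map_comp φ ψ := by
    apply NatTrans.ext
    funext x
    cases x
    · rfl
    · ext q
      induction q using Quot.ind
      rfl

/-- The quotient homomorphism `π_G : G ⟶ cc(G)` (identity on edges). -/
def ccπ (G : Grph) : G ⟶ cc.obj G where
  app x := match x with
    | .zero => TypeCat.ofHom fun e => e
    | .one => TypeCat.ofHom fun v => Quot.mk G.connRel v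
  naturality := by
    intro X Y f
    change WalkingParallelPairHom X Y at f
    cases f with
    | id =>
        show G.map (𝟙 _) ≫ _ = _ ≫ (cc.obj G).map (𝟙 _)
        rw [CategoryTheory.Functor.map_id, CategoryTheory.Functor.map_id,
          Category.id_comp, Category.comp_id]
    | left => rfl
    | right => rfl

/-- The graph with one vertex and two loop edges. -/
def twoLoops : Grph := parallelPair (TypeCat.ofHom fun _ : Bool => PUnit.unit)
  (TypeCat.ofHom fun _ : Bool => PUnit.unit)

/-- The terminal graph: one vertex with a single loop edge. -/
def oneLoop : Grph := parallelPair (TypeCat.ofHom fun _ : PUnit => PUnit.unit)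
  (TypeCat.ofHom fun _ : PUnit => PUnit.unit)

end Grph

/-- A lasso on a category `C`: an endofunctor preserving pushouts of spans of
monomorphisms, together with a natural transformation from the identity functor all of
whose components are epimorphisms. -/
structure Lasso (C : Type u) [Category.{v} C] where
  /-- The underlying endofunctor. -/
  L : C ⥤ C
  /-- The natural transformation from the identity functor. -/
  η : 𝟭 C ⟶ L
  /-- `L` preserves pushouts of spans of monomorphisms. -/
  preserves_monic_pushouts :
    ∀ ⦃A B D P : C⦄ (f : A ⟶ B) (g : A ⟶ D) (h : B ⟶ P) (k : D ⟶ P),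
      Mono f → Mono g → IsPushout f g h k →
      IsPushout (L.map f) (L.map g) (L.map h) (L.map k)
  /-- Every component of `η` is an epimorphism. -/
  epi_components : ∀ X : C, Epi (η.app X)

open Grph

namespace LassoAux

open Grph WalkingParallelPair WalkingParallelPairHom

/-- The graph with one vertex and no edges. -/
def pt : Grph := parallelPair (TypeCat.ofHom fun x : PEmpty.{1} => PUnit.unit) (TypeCat.ofHom fun _ => PUnit.unit)

/-- The inclusion of the point into the one-loop graph. -/
def ptToOneLoop : pt ⟶ oneLoop :=
  parallelPairHom _ _ _ _ (TypeCat.ofHom fun (x : PEmpty.{1}) => x.elim) (TypeCat.ofHom fun _ => PUnit.unit)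
    (by ext x) (by ext x)

/-- The map sending the loop to the `false` loop. -/
def loopF : oneLoop ⟶ twoLoops :=
  parallelPairHom _ _ _ _ (TypeCat.ofHom fun _ => false) (TypeCat.ofHom fun _ => PUnit.unit) rfl rfl

/-- The map sending the loop to the `true` loop. -/
def loopT : oneLoop ⟶ twoLoops :=
  parallelPairHom _ _ _ _ (TypeCat.ofHom fun _ => true) (TypeCat.ofHom fun _ => PUnit.unit) rfl rfl

lemma mono_ptToOneLoop : Mono ptToOneLoop := by
  have : ∀ x, Mono (ptToOneLoop.app x) := by
    intro x
    rw [CategoryTheory.mono_iff_injective]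
    cases x
    · exact fun a => PEmpty.elim a
    · intro a b _; rfl
  exact NatTrans.mono_of_mono_app _

lemma comm_loops : ptToOneLoop ≫ loopF = ptToOneLoop ≫ loopT := by
  apply NatTrans.ext
  funext x
  cases x
  · ext e; exact PEmpty.elim e
  · rfl

/-- The two-loop graph is the pushout of two copies of the one-loop graph over the point. -/
lemma isPushout_twoLoops : IsPushout ptToOneLoop ptToOneLoop loopF loopT := by
  refine IsPushout.of_isColimit' ⟨comm_loops⟩ ?_
  refine PushoutCocone.IsColimit.mk _ (fun s => ?_) (fun s => ?_) (fun s => ?_) (fun s m hl hr => ?_)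
  · exact
      { app := fun x => match x with
          | .zero => TypeCat.ofHom fun b => match b with
              | false => s.inl.app .zero PUnit.unit
              | true => s.inr.app .zero PUnit.unit
          | .one => TypeCat.ofHom fun _ => s.inl.app .one PUnit.unit
        naturality := by
          intro X Y f
          change WalkingParallelPairHom X Y at f
          cases f with
          | id =>
              show twoLoops.map (𝟙 _) ≫ _ = _ ≫ s.pt.map (𝟙 _)
              rw [CategoryTheory.Functor.map_id, CategoryTheory.Functor.map_id,
                Category.id_comp, Category.comp_id]
          | left =>
              ext b
              cases b with
              | false =>
                  show s.inl.app .one PUnit.unit =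
                    s.pt.map WalkingParallelPairHom.left (s.inl.app .zero PUnit.unit)
                  exact ConcreteCategory.congr_hom (s.inl.naturality WalkingParallelPairHom.left) PUnit.unit
              | true =>
                  show s.inl.app .one PUnit.unit =
                    s.pt.map WalkingParallelPairHom.left (s.inr.app .zero PUnit.unit)
                  have hc : s.inl.app .one PUnit.unit = s.inr.app .one PUnit.unit :=
                    ConcreteCategory.congr_hom (congr_app s.condition WalkingParallelPair.one) PUnit.unit
                  have hn : s.inr.app .one PUnit.unit =
                      s.pt.map WalkingParallelPairHom.left (s.inr.app .zero PUnit.unit) :=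
                    ConcreteCategory.congr_hom (s.inr.naturality WalkingParallelPairHom.left) PUnit.unit
                  exact hc.trans hn
          | right =>
              ext b
              cases b with
              | false =>
                  show s.inl.app .one PUnit.unit =
                    s.pt.map WalkingParallelPairHom.right (s.inl.app .zero PUnit.unit)
                  exact ConcreteCategory.congr_hom (s.inl.naturality WalkingParallelPairHom.right) PUnit.unit
              | true =>
                  show s.inl.app .one PUnit.unit =
                    s.pt.map WalkingParallelPairHom.right (s.inr.app .zero PUnit.unit)
                  have hc : s.inl.app .one PUnit.unit = s.inr.app .one PUnit.unit :=
                    ConcreteCategory.congr_hom (congr_app s.condition WalkingParallelPair.one) PUnit.unit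
                  have hn : s.inr.app .one PUnit.unit =
                      s.pt.map WalkingParallelPairHom.right (s.inr.app .zero PUnit.unit) :=
                    ConcreteCategory.congr_hom (s.inr.naturality WalkingParallelPairHom.right) PUnit.unit
                  exact hc.trans hn }
  · apply NatTrans.ext
    funext x
    cases x
    · rfl
    · rfl
  · apply NatTrans.ext
    funext x
    cases x
    · rfl
    · ext u
      exact ConcreteCategory.congr_hom (congr_app s.condition WalkingParallelPair.one) PUnit.unit
  · apply NatTrans.ext
    funext x
    cases x
    · ext b
      cases b with
      | false => exact ConcreteCategory.congr_hom (congr_app hl WalkingParallelPair.zero) PUnit.unit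
      | true => exact ConcreteCategory.congr_hom (congr_app hr WalkingParallelPair.zero) PUnit.unit
    · ext u
      exact ConcreteCategory.congr_hom (congr_app hl WalkingParallelPair.one) PUnit.unit

end LassoAux

open LassoAux in
lemma lasso_edge_ne (l : Lasso Grph) :
    (l.η.app twoLoops).app .zero false ≠ (l.η.app twoLoops).app .zero true := by
  -- components of `η` are surjective
  have hsurj : ∀ (H : Grph) (x : WalkingParallelPair),
      Function.Surjective ((l.η.app H).app x) := by
    intro H x
    have : Epi (l.η.app H) := l.epi_components H
    have : Epi ((l.η.app H).app x) := inferInstance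
    exact (epi_iff_surjective _).mp this
  -- `L pt` has no edges
  have hLpt : IsEmpty ((l.L.obj pt).obj .zero) := by
    constructor
    intro a
    obtain ⟨e, -⟩ := hsurj pt .zero a
    exact e.elim
  -- the preserved pushout, evaluated at edges
  have hpo := l.preserves_monic_pushouts ptToOneLoop ptToOneLoop loopF loopT
    mono_ptToOneLoop mono_ptToOneLoop isPushout_twoLoops
  have hzero := hpo.map ((evaluation WalkingParallelPair Type).obj .zero)
  simp only [evaluation_obj_map] at hzero
  have w : (l.L.map ptToOneLoop).app .zero ≫ (TypeCat.ofHom fun _ => false) =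
      (l.L.map ptToOneLoop).app .zero ≫ (TypeCat.ofHom fun _ => true) := by
    ext a
    exact (hLpt.false a).elim
  set φ := hzero.desc (TypeCat.ofHom fun _ => false) (TypeCat.ofHom fun _ => true) w with hφ
  set x := (l.η.app oneLoop).app .zero PUnit.unit with hx
  have hF : φ ((l.L.map loopF).app .zero x) = false :=
    ConcreteCategory.congr_hom (hzero.inl_desc (TypeCat.ofHom fun _ => false) (TypeCat.ofHom fun _ => true) w) x
  have hT : φ ((l.L.map loopT).app .zero x) = true :=
    ConcreteCategory.congr_hom (hzero.inr_desc (TypeCat.ofHom fun _ => false) (TypeCat.ofHom fun _ => true) w) x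
  have hnatF : (l.η.app twoLoops).app .zero false = (l.L.map loopF).app .zero x :=
    ConcreteCategory.congr_hom (congr_app (l.η.naturality loopF) WalkingParallelPair.zero) PUnit.unit
  have hnatT : (l.η.app twoLoops).app .zero true = (l.L.map loopT).app .zero x :=
    ConcreteCategory.congr_hom (congr_app (l.η.naturality loopT) WalkingParallelPair.zero) PUnit.unit
  intro h
  rw [hnatF, hnatT] at h
  rw [h, hT] at hF
  exact Bool.noConfusion hF


theorem stmt5 (l : Lasso Grph)
    (hv : ∀ G : Grph, Function.Bijective ((l.η.app G).app .one)) (G : Grph) :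
    IsIso (l.η.app G) := by
  classical
  have hsurj : ∀ (x : WalkingParallelPair),
      Function.Surjective ((l.η.app G).app x) := by
    intro x
    have : Epi (l.η.app G) := l.epi_components G
    have : Epi ((l.η.app G).app x) := inferInstance
    exact (epi_iff_surjective _).mp this
  have hinj : Function.Injective ((l.η.app G).app .zero) := by
    intro e₁ e₂ h12
    by_contra hne
    let ψ : G ⟶ twoLoops :=
      { app := fun x => match x with
          | .zero => TypeCat.ofHom fun e => if e = e₂ then true else false
          | .one => TypeCat.ofHom fun _ => PUnit.unit
        naturality := by
          intro X Y f
          change WalkingParallelPairHom X Y at f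
          cases f with
          | id =>
              show G.map (𝟙 _) ≫ _ = _ ≫ twoLoops.map (𝟙 _)
              rw [CategoryTheory.Functor.map_id, CategoryTheory.Functor.map_id,
                Category.id_comp, Category.comp_id]
          | left => rfl
          | right => rfl }
    have h1 : (l.η.app twoLoops).app .zero (ψ.app .zero e₁) =
        (l.L.map ψ).app .zero ((l.η.app G).app .zero e₁) :=
      ConcreteCategory.congr_hom (congr_app (l.η.naturality ψ) WalkingParallelPair.zero) e₁
    have h2 : (l.η.app twoLoops).app .zero (ψ.app .zero e₂) =
        (l.L.map ψ).app .zero ((l.η.app G).app .zero e₂) :=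
      ConcreteCategory.congr_hom (congr_app (l.η.naturality ψ) WalkingParallelPair.zero) e₂
    have hψ1 : ψ.app .zero e₁ = false := by
      show (if e₁ = e₂ then true else false) = false
      simp [hne]
    have hψ2 : ψ.app .zero e₂ = true := by
      show (if e₂ = e₂ then true else false) = true
      simp
    rw [hψ1] at h1
    rw [hψ2] at h2
    rw [h12] at h1
    exact lasso_edge_ne l (h1.trans h2.symm)
  have : ∀ x, IsIso ((l.η.app G).app x) := by
    intro x
    rw [CategoryTheory.isIso_iff_bijective]
    cases x
    · exact ⟨hinj, hsurj _⟩
    · exact hv G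
  exact NatIso.isIso_of_isIso_app _
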